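/- Let (Y_i) be i.i.d. random variables independent of a Poisson variable N with parameter θ, with E|Y_1| < ∞. Then for any bounded measurable l, E[(Σ_{i=1}^N Y_i) · l(Σ_{i=1}^N Y_i)] = θ · E[Y' · l(Σ_{i=1}^N Y_i + Y')], where Y' is an independent copy of Y_1. -/

import Mathlib

open MeasureTheory ProbabilityTheory

/-- Index type for the family consisting of the Poisson count (`none`) and the
jump sizes (`some i`). -/
def jumpIndexType : Option ℕ → Type
  | none => ℕ
  | some _ => ℝ

instance jumpIndexTypeMeasurableSpace : ∀ o : Option ℕ, MeasurableSpace (jumpIndexType o)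
  | none => inferInstanceAs (MeasurableSpace ℕ)
  | some _ => inferInstanceAs (MeasurableSpace ℝ)

/-- The family of random variables `N, Y₀, Y₁, Y₂, …` seen as one dependent family. -/
def jumpFamily {Ω : Type*} (N : Ω → ℕ) (Y : ℕ → Ω → ℝ) :
    (o : Option ℕ) → Ω → jumpIndexType o
  | none => N
  | some i => Y i

/-!
Write `S_k = Y_1 + ⋯ + Y_k` and `Y' = Y_0`, and split the expectation over the events `{N = k}`.
Independence of `N` and the jumps gives `E[S_N l(S_N); N = k] = P(N = k) E[S_k l(S_k)]`, and since
the jumps are i.i.d., a transposition of coordinates shows `E[Y_i l(S_k)] = E[Y' l(S_{k-1} + Y')]`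
for every `i ≤ k`, whence `E[S_k l(S_k)] = k E[Y' l(S_{k-1} + Y')]`. The Poisson weights satisfy
`k P(N = k) = θ P(N = k - 1)`, so the two series agree term by term. Boundedness of `l`,
`E|Y'| < ∞` and `E N < ∞` make all series absolutely convergent.
-/

namespace MeasureTheory

variable {Ω : Type*} {mΩ : MeasurableSpace Ω} {μ : Measure Ω} {l : ℝ → ℝ} {C : ℝ}

lemma Integrable.mul_comp_of_abs_le {X Z : Ω → ℝ} (hX : Integrable X μ) (hZ : AEMeasurable Z μ)
    (hl : Measurable l) (hC : ∀ x, |l x| ≤ C) : Integrable (fun ω ↦ X ω * l (Z ω)) μ :=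
  hX.mul_bdd (hl.comp_aemeasurable hZ).aestronglyMeasurable (.of_forall fun ω ↦ hC (Z ω))

lemma integral_abs_mul_comp_le {X Z : Ω → ℝ} (hX : Integrable X μ) (hC : ∀ x, |l x| ≤ C) :
    ∫ ω, |X ω * l (Z ω)| ∂μ ≤ C * ∫ ω, |X ω| ∂μ := by
  rw [← integral_const_mul]
  refine integral_mono_of_nonneg (.of_forall fun ω ↦ abs_nonneg _) (hX.abs.const_mul C)
    (.of_forall fun ω ↦ ?_)
  dsimp only
  rw [abs_mul, mul_comm]
  exact mul_le_mul_of_nonneg_right (hC _) (abs_nonneg _)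

end MeasureTheory

namespace ProbabilityTheory

variable {Ω : Type*} {mΩ : MeasurableSpace Ω} {μ : Measure Ω}

section CountableDecomposition

variable {α : Type*} [MeasurableSpace α] [Countable α] [MeasurableSingletonClass α]

lemma IndepFun.integral_indicator_comp_mul {N : Ω → α} {X : Ω → ℝ} (h : IndepFun N X μ)
    (hN : AEMeasurable N μ) (hX : AEStronglyMeasurable X μ) (k : α) :
    ∫ ω, ({k} : Set α).indicator 1 (N ω) * X ω ∂μ = (μ.map N).real {k} * ∫ ω, X ω ∂μ := by
  have hφ : Measurable (({k} : Set α).indicator (1 : α → ℝ)) := measurable_of_countable _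
  calc ∫ ω, ({k} : Set α).indicator 1 (N ω) * X ω ∂μ
      = (∫ ω, ({k} : Set α).indicator 1 (N ω) ∂μ) * ∫ ω, X ω ∂μ :=
        (h.comp hφ measurable_id).integral_fun_mul_eq_mul_integral
          (hφ.comp_aemeasurable hN).aestronglyMeasurable hX
    _ = (μ.map N).real {k} * ∫ ω, X ω ∂μ := by
        rw [← integral_map hN hφ.aestronglyMeasurable,
          integral_indicator_one (measurableSet_singleton k)]

lemma hasSum_integral_comp_of_indepFun {N : Ω → α} (hN : AEMeasurable N μ)
    {g : α → Ω → ℝ} (hg : ∀ k, Integrable (g k) μ) (hind : ∀ k, IndepFun N (g k) μ)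
    (hsum : Summable fun k ↦ (μ.map N).real {k} * ∫ ω, |g k ω| ∂μ) :
    HasSum (fun k ↦ (μ.map N).real {k} * ∫ ω, g k ω ∂μ) (∫ ω, g (N ω) ω ∂μ) := by
  have hφ : ∀ k, Measurable (({k} : Set α).indicator (1 : α → ℝ)) := fun k ↦
    measurable_of_countable _
  have hF_int : ∀ k, Integrable (fun ω ↦ ({k} : Set α).indicator 1 (N ω) * g k ω) μ := fun k ↦
    (hg k).bdd_mul (c := 1) ((hφ k).comp_aemeasurable hN).aestronglyMeasurable
      (.of_forall fun ω ↦ by by_cases h : N ω = k <;> simp [h])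
  have hF_norm : ∀ k, ∫ ω, ‖({k} : Set α).indicator 1 (N ω) * g k ω‖ ∂μ
      = (μ.map N).real {k} * ∫ ω, |g k ω| ∂μ := fun k ↦ by
    have hpt : ∀ ω, ‖({k} : Set α).indicator 1 (N ω) * g k ω‖
        = ({k} : Set α).indicator 1 (N ω) * |g k ω| := fun ω ↦ by
      by_cases h : N ω = k <;> simp [h]
    simp_rw [hpt]
    exact ((hind k).comp measurable_id measurable_abs).integral_indicator_comp_mul hN
      (hg k).1.norm k
  have hF_tsum : ∀ ω, ∑' k, ({k} : Set α).indicator 1 (N ω) * g k ω = g (N ω) ω := fun ω ↦ by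
    rw [tsum_eq_single (N ω) fun k hk ↦ by simp [Ne.symm hk]]
    simp
  simpa only [hF_tsum, fun k ↦ (hind k).integral_indicator_comp_mul hN (hg k).1 k] using
    hasSum_integral_of_summable_integral_norm hF_int (by simpa only [hF_norm] using hsum)

end CountableDecomposition

section IdenticallyDistributed

variable {ι : Type*}

lemma iIndepFun.identDistrib_comp_of_injective {β : Type*} [MeasurableSpace β] {Y : ι → Ω → β}
    {ν : Measure β} (hY : iIndepFun Y μ) (hYm : ∀ i, AEMeasurable (Y i) μ)
    (hlaw : ∀ i, μ.map (Y i) = ν) {κ : Type*} [Fintype κ] {t t' : κ → ι} (ht : t.Injective)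
    (ht' : t'.Injective) :
    IdentDistrib (fun ω j ↦ Y (t j) ω) (fun ω j ↦ Y (t' j) ω) μ μ where
  aemeasurable_fst := aemeasurable_pi_lambda _ fun j ↦ hYm (t j)
  aemeasurable_snd := aemeasurable_pi_lambda _ fun j ↦ hYm (t' j)
  map_eq := by
    rw [(hY.precomp ht).map_fun_eq_pi_map fun j ↦ hYm (t j),
      (hY.precomp ht').map_fun_eq_pi_map fun j ↦ hYm (t' j)]
    simp only [hlaw]

lemma integrable_of_map_eq {X Z : Ω → ℝ} (hX : AEMeasurable X μ) (hZ : Integrable Z μ)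
    (h : μ.map X = μ.map Z) : Integrable X μ :=
  (IdentDistrib.integrable_iff ⟨hX, hZ.aemeasurable, h⟩).2 hZ

lemma integral_abs_sum_le_card_mul {Y : ι → Ω → ℝ} {ν : Measure ℝ}
    (hYm : ∀ i, AEMeasurable (Y i) μ) (hlaw : ∀ i, μ.map (Y i) = ν)
    (hint : ∀ i, Integrable (Y i) μ) (s : Finset ι) :
    ∫ ω, |∑ i ∈ s, Y i ω| ∂μ ≤ s.card * ∫ x, |x| ∂ν := by
  have habs : ∀ i, ∫ ω, |Y i ω| ∂μ = ∫ x, |x| ∂ν := fun i ↦ by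
    rw [← hlaw i, integral_map (hYm i) continuous_abs.aestronglyMeasurable]
  calc ∫ ω, |∑ i ∈ s, Y i ω| ∂μ
      ≤ ∫ ω, ∑ i ∈ s, |Y i ω| ∂μ :=
        integral_mono_of_nonneg (.of_forall fun ω ↦ abs_nonneg _)
          (integrable_finsetSum _ fun i _ ↦ (hint i).abs)
          (.of_forall fun ω ↦ Finset.abs_sum_le_sum_abs _ _)
    _ = s.card * ∫ x, |x| ∂ν := by
        rw [integral_finsetSum _ fun i _ ↦ (hint i).abs]
        simp [habs]

end IdenticallyDistributed

section Exchangeability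

variable {Y : ℕ → Ω → ℝ} {ν : Measure ℝ} {l : ℝ → ℝ}

lemma iIndepFun.integral_mul_comp_sum_range_eq (hY : iIndepFun Y μ)
    (hYm : ∀ i, AEMeasurable (Y i) μ) (hlaw : ∀ i, μ.map (Y i) = ν) (hl : Measurable l)
    {i m : ℕ} (hi : i ≤ m) :
    ∫ ω, Y (i + 1) ω * l (∑ j ∈ Finset.range (m + 1), Y (j + 1) ω) ∂μ
      = ∫ ω, Y 0 ω * l (∑ j ∈ Finset.range m, Y (j + 1) ω + Y 0 ω) ∂μ := by
  -- `σ` swaps `Y (i + 1)` into the first slot; both tuples have law `ν ^ (m + 1)`.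
  set σ := Equiv.swap (0 : Fin (m + 1)) ⟨i, by omega⟩
  have hσ : Function.Injective fun j ↦ (σ j : ℕ) + 1 := fun a b h ↦
    σ.injective (Fin.val_injective (Nat.succ_injective h))
  have hΦ : Measurable fun x : Fin (m + 1) → ℝ ↦ x 0 * l (∑ j, x j) := by fun_prop
  have hsum_σ : ∀ ω, ∑ j, Y ((σ j : ℕ) + 1) ω = ∑ j ∈ Finset.range (m + 1), Y (j + 1) ω :=
    fun ω ↦ by
      rw [Equiv.sum_comp σ (fun j : Fin (m + 1) ↦ Y ((j : ℕ) + 1) ω),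
        Fin.sum_univ_eq_sum_range (fun j ↦ Y (j + 1) ω)]
  have hsum_val : ∀ ω, ∑ j : Fin (m + 1), Y j ω = ∑ j ∈ Finset.range m, Y (j + 1) ω + Y 0 ω :=
    fun ω ↦ by rw [Fin.sum_univ_eq_sum_range (fun j ↦ Y j ω), Finset.sum_range_succ']
  have h := ((hY.identDistrib_comp_of_injective hYm hlaw hσ Fin.val_injective).comp hΦ).integral_eq
  simpa [σ, Function.comp_def, hsum_σ, hsum_val] using h

lemma iIndepFun.integral_sum_range_mul_comp (hY : iIndepFun Y μ)
    (hYm : ∀ i, AEMeasurable (Y i) μ) (hlaw : ∀ i, μ.map (Y i) = ν) (hint : Integrable (Y 0) μ)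
    (hl : Measurable l) {C : ℝ} (hC : ∀ x, |l x| ≤ C) (m : ℕ) :
    ∫ ω, (∑ j ∈ Finset.range (m + 1), Y (j + 1) ω) * l (∑ j ∈ Finset.range (m + 1), Y (j + 1) ω) ∂μ
      = (m + 1) * ∫ ω, Y 0 ω * l (∑ j ∈ Finset.range m, Y (j + 1) ω + Y 0 ω) ∂μ := by
  have hYint : ∀ i, Integrable (Y i) μ := fun i ↦
    integrable_of_map_eq (hYm i) hint ((hlaw i).trans (hlaw 0).symm)
  simp_rw [Finset.sum_mul]
  rw [integral_finsetSum _ fun j _ ↦ (hYint (j + 1)).mul_comp_of_abs_le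
      (Finset.aemeasurable_fun_sum _ fun i _ ↦ hYm (i + 1)) hl hC,
    Finset.sum_congr rfl fun j hj ↦
      hY.integral_mul_comp_sum_range_eq hYm hlaw hl (Finset.mem_range_succ_iff.1 hj)]
  simp

end Exchangeability

lemma poissonPMF_toMeasure (r : NNReal) : (poissonPMF r).toMeasure = poissonMeasure r :=
  Measure.ext_of_singleton fun k ↦ by
    rw [PMF.toMeasure_apply_singleton _ _ (measurableSet_singleton k), poissonMeasure_singleton]
    rfl

lemma succ_mul_poissonMeasure_real_singleton_succ (r : NNReal) (k : ℕ) :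
    (k + 1) * (poissonMeasure r).real {k + 1} = r * (poissonMeasure r).real {k} := by
  simp only [poissonMeasure_real_singleton, Nat.factorial_succ, pow_succ]
  push_cast
  field_simp

lemma summable_poissonMeasure_real_singleton (r : NNReal) :
    Summable fun k ↦ (poissonMeasure r).real {k} := by
  simpa only [poissonMeasure_real_singleton] using (hasSum_one_poissonMeasure r).summable

lemma summable_mul_poissonMeasure_real_singleton (r : NNReal) :
    Summable fun k : ℕ ↦ k * (poissonMeasure r).real {k} := by
  refine (summable_nat_add_iff 1).1 ?_
  simpa only [Nat.cast_add, Nat.cast_one, succ_mul_poissonMeasure_real_singleton_succ] using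
    (summable_poissonMeasure_real_singleton r).mul_left (r : ℝ)

section CompoundPoisson

variable {N : Ω → ℕ} {Y : ℕ → Ω → ℝ} {ν : Measure ℝ} {l : ℝ → ℝ} {C : ℝ}

lemma iIndepFun.indepFun_count_jumps (hIndep : iIndepFun (jumpFamily N Y) μ)
    (hNm : AEMeasurable N μ) (hYm : ∀ i, AEMeasurable (Y i) μ)
    {κ : Type*} [Fintype κ] (t : κ → ℕ) :
    IndepFun N (fun ω j ↦ Y (t j) ω) μ := by
  classical
  have hm : ∀ o, AEMeasurable (jumpFamily N Y o) μ := by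
    rintro (_ | i)
    exacts [hNm, hYm i]
  set T := Finset.univ.image fun j ↦ some (t j)
  have h := hIndep.indepFun_finset₀ {none} T (by simp [T]) hm
  have hφ : Measurable fun v : (∀ o : ({none} : Finset (Option ℕ)), jumpIndexType o) ↦
      v ⟨none, Finset.mem_singleton_self _⟩ := measurable_pi_apply _
  have hψ : Measurable fun (v : ∀ o : T, jumpIndexType o) (j : κ) ↦ v ⟨some (t j), by simp [T]⟩ :=
    measurable_pi_lambda _ fun j ↦ measurable_pi_apply _
  exact h.comp hφ hψ

lemma iIndepFun.hasSum_integral_sum_range_mul_comp (hIndep : iIndepFun (jumpFamily N Y) μ)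
    (hNm : AEMeasurable N μ) (hYm : ∀ i, AEMeasurable (Y i) μ) (hlaw : ∀ i, μ.map (Y i) = ν)
    (hint : Integrable (Y 0) μ) (hl : Measurable l) (hC : ∀ x, |l x| ≤ C)
    (hmean : Summable fun k : ℕ ↦ k * (μ.map N).real {k}) :
    HasSum (fun k ↦ (μ.map N).real {k} *
        ∫ ω, (∑ i ∈ Finset.range k, Y (i + 1) ω) * l (∑ i ∈ Finset.range k, Y (i + 1) ω) ∂μ)
      (∫ ω, (∑ i ∈ Finset.range (N ω), Y (i + 1) ω)
        * l (∑ i ∈ Finset.range (N ω), Y (i + 1) ω) ∂μ) := by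
  have hYint : ∀ i, Integrable (Y i) μ := fun i ↦
    integrable_of_map_eq (hYm i) hint ((hlaw i).trans (hlaw 0).symm)
  have hS : ∀ k, Integrable (fun ω ↦ ∑ i ∈ Finset.range k, Y (i + 1) ω) μ := fun k ↦
    integrable_finsetSum _ fun i _ ↦ hYint (i + 1)
  refine hasSum_integral_comp_of_indepFun hNm
    (fun k ↦ (hS k).mul_comp_of_abs_le (hS k).aemeasurable hl hC) (fun k ↦ ?_) ?_
  · have hΦ : Measurable fun x : Fin k → ℝ ↦ (∑ j, x j) * l (∑ j, x j) := by fun_prop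
    have hsum : ∀ ω, ∑ j : Fin k, Y (j + 1) ω = ∑ i ∈ Finset.range k, Y (i + 1) ω := fun ω ↦
      Fin.sum_univ_eq_sum_range (fun i ↦ Y (i + 1) ω) k
    simpa [Function.comp_def, hsum] using
      (hIndep.indepFun_count_jumps hNm hYm fun j : Fin k ↦ (j : ℕ) + 1).comp measurable_id hΦ
  · have hC0 : 0 ≤ C := (abs_nonneg _).trans (hC 0)
    refine .of_nonneg_of_le (fun k ↦ mul_nonneg measureReal_nonneg
      (integral_nonneg fun _ ↦ abs_nonneg _)) (fun k ↦ ?_) (hmean.mul_left (C * ∫ x, |x| ∂ν))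
    have hSabs := integral_abs_sum_le_card_mul (fun i ↦ hYm (i + 1)) (fun i ↦ hlaw (i + 1))
      (fun i ↦ hYint (i + 1)) (Finset.range k)
    rw [Finset.card_range] at hSabs
    calc _ ≤ (μ.map N).real {k} * (C * (k * ∫ x, |x| ∂ν)) :=
          mul_le_mul_of_nonneg_left ((integral_abs_mul_comp_le (hS k) hC).trans
            (mul_le_mul_of_nonneg_left hSabs hC0)) measureReal_nonneg
      _ = _ := by ring

lemma iIndepFun.hasSum_integral_mul_comp_sum_range_add (hIndep : iIndepFun (jumpFamily N Y) μ)
    (hNm : AEMeasurable N μ) (hYm : ∀ i, AEMeasurable (Y i) μ) (hint : Integrable (Y 0) μ)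
    (hl : Measurable l) (hC : ∀ x, |l x| ≤ C) (hsum : Summable fun k ↦ (μ.map N).real {k}) :
    HasSum (fun k ↦ (μ.map N).real {k} *
        ∫ ω, Y 0 ω * l (∑ i ∈ Finset.range k, Y (i + 1) ω + Y 0 ω) ∂μ)
      (∫ ω, Y 0 ω * l (∑ i ∈ Finset.range (N ω), Y (i + 1) ω + Y 0 ω) ∂μ) := by
  refine hasSum_integral_comp_of_indepFun hNm (fun k ↦ hint.mul_comp_of_abs_le
    ((Finset.aemeasurable_fun_sum _ fun i _ ↦ hYm (i + 1)).add (hYm 0)) hl hC) (fun k ↦ ?_) ?_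
  · have hΦ : Measurable fun x : Fin (k + 1) → ℝ ↦ x 0 * l (∑ j, x j) := by fun_prop
    have hsum : ∀ ω, ∑ j : Fin (k + 1), Y j ω = ∑ i ∈ Finset.range k, Y (i + 1) ω + Y 0 ω :=
      fun ω ↦ by rw [Fin.sum_univ_eq_sum_range (fun j ↦ Y j ω), Finset.sum_range_succ']
    simpa [Function.comp_def, hsum] using
      (hIndep.indepFun_count_jumps hNm hYm fun j : Fin (k + 1) ↦ (j : ℕ)).comp measurable_id hΦ
  · refine .of_nonneg_of_le (fun k ↦ mul_nonneg measureReal_nonneg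
      (integral_nonneg fun _ ↦ abs_nonneg _)) (fun k ↦ ?_) (hsum.mul_right (C * ∫ ω, |Y 0 ω| ∂μ))
    exact mul_le_mul_of_nonneg_left (integral_abs_mul_comp_le hint hC) measureReal_nonneg

end CompoundPoisson

end ProbabilityTheory

theorem compound_poisson_chen_stein_general
    {Ω : Type*} [MeasureSpace Ω] [IsProbabilityMeasure (ℙ : Measure Ω)]
    (θ : NNReal)
    (N : Ω → ℕ) (Y : ℕ → Ω → ℝ)
    (hIndep : iIndepFun (jumpFamily N Y) ℙ)
    (hident : ∀ i : ℕ, Measure.map (Y i) ℙ = Measure.map (Y 0) ℙ)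
    (hint : Integrable (Y 0) (ℙ : Measure Ω))
    (hN : Measure.map N ℙ = (poissonPMF θ).toMeasure)
    (l : ℝ → ℝ) (hl : Measurable l) (hbdd : ∃ C : ℝ, ∀ x : ℝ, |l x| ≤ C) :
    ∫ ω, (∑ i ∈ Finset.range (N ω), Y (i + 1) ω)
        * l (∑ i ∈ Finset.range (N ω), Y (i + 1) ω) ∂(ℙ : Measure Ω)
      = (θ : ℝ) * ∫ ω, Y 0 ω
          * l ((∑ i ∈ Finset.range (N ω), Y (i + 1) ω) + Y 0 ω) ∂(ℙ : Measure Ω) := by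
  obtain ⟨C, hC⟩ := hbdd
  have hlawN : Measure.map N ℙ = poissonMeasure θ := hN.trans (poissonPMF_toMeasure θ)
  have hNm : AEMeasurable N ℙ := .of_map_ne_zero (hlawN ▸ IsProbabilityMeasure.ne_zero _)
  have hYm : ∀ i, AEMeasurable (Y i) ℙ := fun i ↦ .of_map_ne_zero <| hident i ▸
    (Measure.map_ne_zero_iff hint.aemeasurable).2 (IsProbabilityMeasure.ne_zero _)
  have hY : iIndepFun Y ℙ := hIndep.precomp (g := some) (Option.some_injective ℕ)
  have hL := hIndep.hasSum_integral_sum_range_mul_comp hNm hYm hident hint hl hC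
    (hlawN ▸ summable_mul_poissonMeasure_real_singleton θ)
  have hR := hIndep.hasSum_integral_mul_comp_sum_range_add hNm hYm hint hl hC
    (hlawN ▸ summable_poissonMeasure_real_singleton θ)
  rw [hlawN] at hL hR
  have hL' := (hasSum_nat_add_iff' 1).2 hL
  simp only [Finset.sum_range_one, Finset.sum_range_zero, zero_mul, integral_zero, mul_zero,
    sub_zero] at hL'
  refine hL'.unique ((hR.mul_left (θ : ℝ)).congr_fun fun m ↦ ?_)
  rw [hY.integral_sum_range_mul_comp hYm hident hint hl hC m]
  linear_combination (∫ ω, Y 0 ω * l (∑ j ∈ Finset.range m, Y (j + 1) ω + Y 0 ω))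
    * succ_mul_poissonMeasure_real_singleton_succ θ m

/-- **Compound Poisson Chen–Stein identity.**
Let `(Y_i)` be i.i.d. integrable random variables, independent of a Poisson
variable `N` with parameter `θ` (the whole family `N, Y₀, Y₁, …` being mutually
independent, with `Y' = Y₀` playing the role of the independent copy and the sum
taken over `Y₁, …, Y_N`).  Then for any bounded measurable `l`,
`E[(Σ_{i=1}^N Y_i) · l(Σ_{i=1}^N Y_i)] = θ · E[Y' · l(Σ_{i=1}^N Y_i + Y')]`. -/
theorem compound_poisson_chen_stein
    {Ω : Type*} [MeasureSpace Ω] [IsProbabilityMeasure (ℙ : Measure Ω)]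
    (θ : NNReal) (hθ : 0 < θ)
    (N : Ω → ℕ) (Y : ℕ → Ω → ℝ)
    (hIndep : iIndepFun (jumpFamily N Y) ℙ)
    (hident : ∀ i : ℕ, Measure.map (Y i) ℙ = Measure.map (Y 0) ℙ)
    (hint : Integrable (Y 0) (ℙ : Measure Ω))
    (hN : Measure.map N ℙ = (poissonPMF θ).toMeasure)
    (l : ℝ → ℝ) (hl : Measurable l) (hbdd : ∃ C : ℝ, ∀ x : ℝ, |l x| ≤ C) :
    ∫ ω, (∑ i ∈ Finset.range (N ω), Y (i + 1) ω)
        * l (∑ i ∈ Finset.range (N ω), Y (i + 1) ω) ∂(ℙ : Measure Ω)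
      = (θ : ℝ) * ∫ ω, Y 0 ω
          * l ((∑ i ∈ Finset.range (N ω), Y (i + 1) ω) + Y 0 ω) ∂(ℙ : Measure Ω) :=
  compound_poisson_chen_stein_general θ N Y hIndep hident hint hN l hl hbdd
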